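/- arXiv:0909.2422 — 2 statements merged into one kernel-verified Lean document; each statement's English description precedes it below -/
import Mathlib

section
/- With e(y,t) as above, there exists C > 0 such that the time derivative satisfies the pointwise bound |e_t(y,t)| ≤ C t^{-1/2}(e^{-(-y-t)²/(Ct)} + e^{-(-y+t)²/(Ct)}) for all y ∈ ℝ and t > 0; in particular for small t ≤ 1 this requires exploiting cancellation between the two Gaussian terms arising when differentiating in t. -/
/-!
Write `a = (-y - t)/√(4t)`, `b = (-y + t)/√(4t)` and `g z = z e^{-z²}`. Differentiating,
`∂ₜ eKer y t = (2√π)⁻¹ ((g b - g a)/(2t) - (e^{-a²} + e^{-b²})/√(4t))`. The second term is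
already of order `t^{-1/2}`. The first one is as well, although it carries `1/t`: since
`b - a = √t`, the difference `g b - g a` is `O(√t)` times Gaussians in `a` and `b`
(mean value theorem). Finally `e^{-a²/4} = e^{-(-y-t)²/(16t)}`, so `C = 16` works.
-/

noncomputable def errfn (z : ℝ) : ℝ :=
  (Real.sqrt Real.pi)⁻¹ * ∫ ξ in Set.Iic z, Real.exp (-ξ ^ 2)

noncomputable def eKer (y t : ℝ) : ℝ :=
  (1 / 2) * (errfn ((-y - t) / Real.sqrt (4 * t)) - errfn ((-y + t) / Real.sqrt (4 * t)))

open Real Set MeasureTheory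

lemma abs_le_exp_sq_div_two (z : ℝ) : |z| ≤ exp (z ^ 2 / 2) := by
  have := add_one_le_exp (z ^ 2 / 2)
  nlinarith [sq_nonneg (|z| - 1), sq_abs z]

lemma one_add_two_mul_sq_le (z : ℝ) : 1 + 2 * z ^ 2 ≤ 4 * exp (z ^ 2 / 2) := by
  have := add_one_le_exp (z ^ 2 / 2)
  nlinarith [sq_nonneg z]

lemma abs_mul_exp_neg_sq_le (z : ℝ) : |z * exp (-z ^ 2)| ≤ exp (-z ^ 2 / 2) :=
  calc |z * exp (-z ^ 2)| = |z| * exp (-z ^ 2) := by rw [abs_mul, abs_of_pos (exp_pos _)]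
    _ ≤ exp (z ^ 2 / 2) * exp (-z ^ 2) := by gcongr; exact abs_le_exp_sq_div_two z
    _ = exp (-z ^ 2 / 2) := by rw [← exp_add]; ring_nf

lemma hasDerivAt_mul_exp_neg_sq (z : ℝ) :
    HasDerivAt (fun w => w * exp (-w ^ 2)) ((1 - 2 * z ^ 2) * exp (-z ^ 2)) z := by
  have hsq : HasDerivAt (fun w => -w ^ 2) (-(2 * z)) z := by
    simpa [Pi.neg_def] using (hasDerivAt_pow 2 z).neg
  exact ((hasDerivAt_id' z).mul hsq.exp).congr_deriv (by ring)

lemma abs_one_sub_two_mul_sq_mul_exp_neg_sq_le (z : ℝ) :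
    |(1 - 2 * z ^ 2) * exp (-z ^ 2)| ≤ 4 * exp (-z ^ 2 / 2) :=
  calc |(1 - 2 * z ^ 2) * exp (-z ^ 2)| = |1 - 2 * z ^ 2| * exp (-z ^ 2) := by
        rw [abs_mul, abs_of_pos (exp_pos _)]
    _ ≤ (4 * exp (z ^ 2 / 2)) * exp (-z ^ 2) := by
        gcongr
        exact (abs_le.2 ⟨by nlinarith [sq_nonneg z], by nlinarith [sq_nonneg z]⟩).trans
          (one_add_two_mul_sq_le z)
    _ = 4 * exp (-z ^ 2 / 2) := by rw [mul_assoc, ← exp_add]; ring_nf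

lemma exp_half_le_two : exp (1 / 2 : ℝ) ≤ 2 := by
  have h : exp (1 / 2 : ℝ) ^ 2 = exp 1 := by rw [← exp_nat_mul]; norm_num
  nlinarith [exp_one_lt_d9, exp_pos (1 / 2 : ℝ)]

lemma exp_neg_sq_div_two_le {x a : ℝ} (h : |x - a| ≤ 1) :
    exp (-x ^ 2 / 2) ≤ 2 * exp (-a ^ 2 / 4) := by
  have hsq : (x - a) ^ 2 ≤ 1 := by nlinarith [sq_abs (x - a), abs_nonneg (x - a)]
  calc exp (-x ^ 2 / 2) ≤ exp (1 / 2 + -a ^ 2 / 4) := by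
        gcongr; nlinarith [sq_nonneg (a - 2 * x)]
    _ ≤ 2 * exp (-a ^ 2 / 4) := by
        rw [exp_add]; gcongr; exact exp_half_le_two

lemma abs_mul_exp_neg_sq_sub_le (a b : ℝ) :
    |b * exp (-b ^ 2) - a * exp (-a ^ 2)|
      ≤ 8 * |b - a| * (exp (-a ^ 2 / 4) + exp (-b ^ 2 / 4)) := by
  have hdecay (z : ℝ) : exp (-z ^ 2 / 2) ≤ exp (-z ^ 2 / 4) :=
    exp_le_exp.2 (by nlinarith [sq_nonneg z])
  rcases le_or_gt |b - a| 1 with hab | hab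
  · have hderiv (x : ℝ) (hx : x ∈ uIcc a b) :
        ‖(1 - 2 * x ^ 2) * exp (-x ^ 2)‖ ≤ 8 * exp (-a ^ 2 / 4) := by
      have hxa : |x - a| ≤ 1 := (abs_sub_left_of_mem_uIcc hx).trans hab
      rw [Real.norm_eq_abs]
      linarith [abs_one_sub_two_mul_sq_mul_exp_neg_sq_le x, exp_neg_sq_div_two_le hxa]
    have hmvt := (convex_uIcc a b).norm_image_sub_le_of_norm_hasDerivWithin_le
      (fun x _ => (hasDerivAt_mul_exp_neg_sq x).hasDerivWithinAt) hderiv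
      left_mem_uIcc right_mem_uIcc
    simp only [Real.norm_eq_abs] at hmvt
    nlinarith [abs_nonneg (b - a), exp_pos (-b ^ 2 / 4)]
  · calc |b * exp (-b ^ 2) - a * exp (-a ^ 2)|
        ≤ |b * exp (-b ^ 2)| + |a * exp (-a ^ 2)| := abs_sub _ _
      _ ≤ exp (-a ^ 2 / 4) + exp (-b ^ 2 / 4) := by
        linarith [abs_mul_exp_neg_sq_le a, abs_mul_exp_neg_sq_le b, hdecay a, hdecay b]
      _ ≤ 8 * |b - a| * (exp (-a ^ 2 / 4) + exp (-b ^ 2 / 4)) := by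
        nlinarith [exp_pos (-a ^ 2 / 4), exp_pos (-b ^ 2 / 4)]

lemma integrable_exp_neg_sq : Integrable (fun ξ : ℝ => exp (-ξ ^ 2)) := by
  simpa using integrable_exp_neg_mul_sq (b := 1) one_pos

lemma hasDerivAt_errfn (z : ℝ) : HasDerivAt errfn ((√π)⁻¹ * exp (-z ^ 2)) z := by
  have hsplit (w : ℝ) : errfn w
      = (√π)⁻¹ * ((∫ ξ in Iic 0, exp (-ξ ^ 2)) + ∫ ξ in (0 : ℝ)..w, exp (-ξ ^ 2)) := by
    rw [errfn, ← intervalIntegral.integral_Iic_sub_Iic integrable_exp_neg_sq.integrableOn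
      integrable_exp_neg_sq.integrableOn]
    ring
  have hcont : Continuous fun ξ : ℝ => exp (-ξ ^ 2) := by fun_prop
  have hftc : HasDerivAt (fun w => ∫ ξ in (0 : ℝ)..w, exp (-ξ ^ 2)) (exp (-z ^ 2)) z :=
    intervalIntegral.integral_hasDerivAt_right integrable_exp_neg_sq.intervalIntegrable
      (hcont.stronglyMeasurableAtFilter _ _) hcont.continuousAt
  rw [funext hsplit]
  exact (hftc.const_add _).const_mul _

lemma HasDerivAt.div_sqrt_four_mul {f : ℝ → ℝ} {f' t : ℝ} (hf : HasDerivAt f f' t) (ht : 0 < t) :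
    HasDerivAt (fun s => f s / √(4 * s)) (f' / √(4 * t) - f t / √(4 * t) / (2 * t)) t := by
  have hr : 0 < √(4 * t) := sqrt_pos.2 (by positivity)
  have hr2 : √(4 * t) ^ 2 = 4 * t := sq_sqrt (by positivity)
  have hsqrt : HasDerivAt (fun s => √(4 * s)) (4 / (2 * √(4 * t))) t :=
    ((hasDerivAt_id t).const_mul 4).sqrt (by positivity) |>.congr_deriv (by simp)
  refine (hf.div hsqrt hr.ne').congr_deriv ?_
  field_simp
  linear_combination f t * hr2

lemma hasDerivAt_eKer (y : ℝ) {t : ℝ} (ht : 0 < t) :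
    HasDerivAt (eKer y)
      ((√π)⁻¹ / 2 *
        (((-y + t) / √(4 * t) * exp (-((-y + t) / √(4 * t)) ^ 2)
            - (-y - t) / √(4 * t) * exp (-((-y - t) / √(4 * t)) ^ 2)) / (2 * t)
          - (exp (-((-y - t) / √(4 * t)) ^ 2) + exp (-((-y + t) / √(4 * t)) ^ 2)) / √(4 * t)))
      t := by
  have ha := (hasDerivAt_errfn _).comp t (((hasDerivAt_id t).const_sub (-y)).div_sqrt_four_mul ht)
  have hb := (hasDerivAt_errfn _).comp t (((hasDerivAt_id t).const_add (-y)).div_sqrt_four_mul ht)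
  exact ((ha.sub hb).const_mul (1 / 2)).congr_deriv (by simp only [id]; ring)

lemma inv_sqrt_pi_le_one : (√π)⁻¹ ≤ 1 :=
  inv_le_one_of_one_le₀ (one_le_sqrt.2 (by linarith [pi_gt_three]))

lemma abs_deriv_eKer_le (y : ℝ) {t : ℝ} (ht : 0 < t) :
    |deriv (eKer y) t| ≤ 9 / (2 * √(4 * t)) *
      (exp (-((-y - t) / √(4 * t)) ^ 2 / 4) + exp (-((-y + t) / √(4 * t)) ^ 2 / 4)) := by
  rw [(hasDerivAt_eKer y ht).deriv]
  set r := √(4 * t)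
  set a := (-y - t) / r
  set b := (-y + t) / r
  set E := exp (-a ^ 2 / 4) + exp (-b ^ 2 / 4)
  have hr : 0 < r := sqrt_pos.2 (by positivity)
  have hba : b - a = 2 * t / r := by simp only [a, b]; ring
  have hcancel : |b * exp (-b ^ 2) - a * exp (-a ^ 2)| / (2 * t) ≤ 8 * E / r :=
    calc |b * exp (-b ^ 2) - a * exp (-a ^ 2)| / (2 * t) ≤ 8 * |b - a| * E / (2 * t) := by
          gcongr; exact abs_mul_exp_neg_sq_sub_le a b
      _ = 8 * E / r := by
          rw [hba, abs_of_pos (by positivity)]; field_simp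
  have hsum : exp (-a ^ 2) + exp (-b ^ 2) ≤ E :=
    add_le_add (exp_le_exp.2 (by nlinarith [sq_nonneg a]))
      (exp_le_exp.2 (by nlinarith [sq_nonneg b]))
  calc |(√π)⁻¹ / 2 * ((b * exp (-b ^ 2) - a * exp (-a ^ 2)) / (2 * t)
          - (exp (-a ^ 2) + exp (-b ^ 2)) / r)|
      ≤ 1 / 2 * (|b * exp (-b ^ 2) - a * exp (-a ^ 2)| / (2 * t)
          + (exp (-a ^ 2) + exp (-b ^ 2)) / r) := by
        rw [abs_mul, abs_of_pos (by positivity)]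
        gcongr
        · exact inv_sqrt_pi_le_one
        · refine (abs_sub _ _).trans_eq ?_
          rw [abs_div, abs_div, abs_of_pos (by positivity : (0 : ℝ) < 2 * t),
            abs_of_pos hr, abs_of_pos (by positivity : 0 < exp (-a ^ 2) + exp (-b ^ 2))]
    _ ≤ 1 / 2 * (8 * E / r + E / r) := by gcongr
    _ = 9 / (2 * r) * E := by ring

/-- Pointwise Gaussian bound on the time derivative:
`|e_t(y,t)| ≤ C t^{-1/2}(e^{-(-y-t)²/(Ct)} + e^{-(-y+t)²/(Ct)})`. -/
theorem eKer_deriv_t_bound :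
    ∃ C : ℝ, 0 < C ∧ ∀ (y t : ℝ), 0 < t →
      |deriv (fun s : ℝ => eKer y s) t|
        ≤ C * t ^ (-(1 / 2 : ℝ)) *
            (Real.exp (-(-y - t) ^ 2 / (C * t)) + Real.exp (-(-y + t) ^ 2 / (C * t))) := by
  refine ⟨16, by norm_num, fun y t ht => ?_⟩
  have hr2 : √(4 * t) ^ 2 = 4 * t := sq_sqrt (by positivity)
  have hpow : t ^ (-(1 / 2 : ℝ)) = 2 / √(4 * t) := by
    rw [rpow_neg ht.le, ← sqrt_eq_rpow, sqrt_mul' _ ht.le, show √4 = 2 by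
      rw [show (4 : ℝ) = 2 ^ 2 by norm_num, sqrt_sq zero_le_two]]
    field_simp
  have hexp (x : ℝ) : -x ^ 2 / (16 * t) = -(x / √(4 * t)) ^ 2 / 4 := by
    rw [div_pow, hr2]; field_simp; ring
  rw [hpow, hexp, hexp]
  refine (abs_deriv_eKer_le y ht).trans ?_
  gcongr ?_ * _
  rw [div_le_iff₀ (by positivity)]
  field_simp
  norm_num
end

section
/- If β : [0,∞) → ℝ is continuous, β(0) = 0, and satisfies |β(t)| ≤ C(E₀(1+t)^{-1/2} + β(t)²) for all t ≥ 0 with C ≥ 1 and E₀ ≤ 1/(4C²), then |β(t)| ≤ 2C E₀ (1+t)^{-1/2} for all t ≥ 0. -/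
/-- Continuous induction for the shock-location difference: if `β` is
continuous, `β(0) = 0`, and `|β(t)| ≤ C(E₀(1+t)^{-1/2} + β(t)²)` for all
`t ≥ 0`, with `C ≥ 1` and `0 ≤ E₀ ≤ 1/(4C²)`, then
`|β(t)| ≤ 2CE₀(1+t)^{-1/2}` for all `t ≥ 0`. -/
theorem beta_decay (β : ℝ → ℝ) (C E₀ : ℝ) (hβ : Continuous β) (h0 : β 0 = 0)
    (hC : 1 ≤ C) (hE₀ : 0 ≤ E₀) (hE₀C : E₀ ≤ 1 / (4 * C ^ 2))
    (hiter : ∀ t : ℝ, 0 ≤ t →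
      |β t| ≤ C * (E₀ * (1 + t) ^ (-(1 / 2 : ℝ)) + (β t) ^ 2)) :
    ∀ t : ℝ, 0 ≤ t → |β t| ≤ 2 * C * E₀ * (1 + t) ^ (-(1 / 2 : ℝ)) := by
  have hCpos : (0:ℝ) < C := lt_of_lt_of_le one_pos hC
  have hE₀C' : 4 * C ^ 2 * E₀ ≤ 1 := by
    rw [le_div_iff₀ (by positivity)] at hE₀C
    linarith
  -- key quadratic step: if 2C|β t| ≤ 1 then the decay bound holds at t
  have key : ∀ t : ℝ, 0 ≤ t → 2 * C * |β t| ≤ 1 →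
      |β t| ≤ 2 * C * E₀ * (1 + t) ^ (-(1 / 2 : ℝ)) := by
    intro t ht hb
    have h1 := hiter t ht
    have hx := abs_nonneg (β t)
    have hsq : (β t) ^ 2 = |β t| ^ 2 := (sq_abs (β t)).symm
    rw [hsq] at h1
    nlinarith [mul_nonneg (sub_nonneg.2 hb) hx]
  -- smallness: 2C|β t| ≤ 1 for all t ≥ 0
  have small : ∀ t : ℝ, 0 ≤ t → 2 * C * |β t| ≤ 1 := by
    by_contra hcon
    push_neg at hcon
    obtain ⟨t₀, ht₀, ht₀'⟩ := hcon
    set K : Set ℝ := {t | 0 ≤ t ∧ t ≤ t₀ ∧ 1 ≤ 2 * C * |β t|} with hK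
    have hKclosed : IsClosed K := by
      have hcont : Continuous fun t => 2 * C * |β t| :=
        continuous_const.mul (continuous_abs.comp hβ)
      exact (isClosed_le continuous_const continuous_id).inter
        ((isClosed_le continuous_id continuous_const).inter
          (isClosed_le continuous_const hcont))
    have hKne : K.Nonempty := ⟨t₀, ht₀, le_refl _, le_of_lt ht₀'⟩
    have hKbdd : BddBelow K := ⟨0, fun x hx => hx.1⟩
    set m := sInf K with hm
    have hmK : m ∈ K := hKclosed.csInf_mem hKne hKbdd
    obtain ⟨hm0, hmt₀, hmineq⟩ := hmK
    have hmpos : 0 < m := by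
      rcases hm0.lt_or_eq with h | h
      · exact h
      · exfalso
        rw [← h] at hmineq
        rw [h0] at hmineq
        simp at hmineq
        linarith
    -- below m, the bound 2C|β s| < 1 holds
    have hbelow : ∀ s ∈ Set.Ico (0:ℝ) m, 2 * C * |β s| ≤ 1 := by
      intro s hs
      by_contra hns
      push_neg at hns
      have hsK : s ∈ K := ⟨hs.1, le_trans (le_of_lt hs.2) hmt₀, le_of_lt hns⟩
      exact absurd (csInf_le hKbdd hsK) (not_le.2 hs.2)
    -- by continuity, 2C|β m| ≤ 1
    have hmcl : m ∈ closure (Set.Ico (0:ℝ) m) := by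
      rw [closure_Ico (ne_of_lt hmpos)]
      exact ⟨hm0, le_refl _⟩
    have hnb : (nhdsWithin m (Set.Ico (0:ℝ) m)).NeBot :=
      mem_closure_iff_nhdsWithin_neBot.mp hmcl
    have hlim : Filter.Tendsto (fun s => 2 * C * |β s|)
        (nhdsWithin m (Set.Ico (0:ℝ) m)) (nhds (2 * C * |β m|)) :=
      ((continuous_const.mul (continuous_abs.comp hβ)).tendsto m).mono_left
        nhdsWithin_le_nhds
    have hmle : 2 * C * |β m| ≤ 1 :=
      le_of_tendsto hlim (Filter.Eventually.mono self_mem_nhdsWithin hbelow)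
    -- apply the key step at m, and use (1+m)^{-1/2} < 1
    have hkey := key m hm0 hmle
    have hwlt : (1 + m) ^ (-(1 / 2 : ℝ)) < 1 :=
      Real.rpow_lt_one_of_one_lt_of_neg (by linarith) (by norm_num)
    have hwpos : 0 < (1 + m) ^ (-(1 / 2 : ℝ)) :=
      Real.rpow_pos_of_pos (by linarith) _
    nlinarith [mul_le_mul_of_nonneg_right hE₀C' (le_of_lt hwpos)]
  intro t ht
  exact key t ht (small t ht)
end
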